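/- Let λ_i, μ_i > 0 for i ∈ [N] with ∑_i λ_i/μ_i = 1, and let F(x) = ∑_i x_i − max_i x_i on ℝ₊^N. Consider the generator L acting on functions f by L f(x) = ∑_i λ_i (f(x + e_i/μ_i) − f(x)) + ∑_{i ∈ K(x)} p_i^{K(x)} μ_i (f(x − e_i/μ_i) − f(x)), where K(x) = { i : 0 < x_i ≤ x_j ∀j } and (p_i^K) is a probability vector supported on K. Then for every x ∈ ℝ₊^N with F(x) > 0 and min_{i∈K(x)} x_i ≥ 1/μ_i (so all jumps stay in ℝ₊^N), L F(x) ≤ ∑_{i ∉ M(x)} λ_i/μ_i − 1 < 0, where M(x) is the argmax set of x. -/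
import Mathlib


/-- Lyapunov drift for SSQ. Let `λᵢ, μᵢ > 0` with `∑ᵢ λᵢ/μᵢ = 1`, let
`F(x) = ∑ᵢ xᵢ − maxᵢ xᵢ`, let `K(x)` be the set of indices of minimal strictly positive
coordinates, `M(x)` the argmax set, and `p` a probability vector supported on `K(x)`.
If `F(x) > 0` and all downward jumps stay in `ℝ₊^N` (i.e. `1/μᵢ ≤ xᵢ` for `i ∈ K(x)`),
then the generator applied to `F` at `x` satisfies
`L F(x) ≤ ∑_{i ∉ M(x)} λᵢ/μᵢ − 1 < 0`. -/
theorem stmt13 {N : ℕ} (hN : 2 ≤ N)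
    (hne : (Finset.univ : Finset (Fin N)).Nonempty)
    (lam mu : Fin N → ℝ) (hlam : ∀ i, 0 < lam i) (hmu : ∀ i, 0 < mu i)
    (hcrit : ∑ i, lam i / mu i = 1)
    (x : Fin N → ℝ) (hx : ∀ i, 0 ≤ x i)
    (F : (Fin N → ℝ) → ℝ)
    (hF : ∀ y, F y = (∑ j, y j) - Finset.univ.sup' hne y)
    (Kx : Finset (Fin N))
    (hK : Kx = Finset.univ.filter (fun i => 0 < x i ∧ ∀ j, 0 < x j → x i ≤ x j))
    (Mx : Finset (Fin N))
    (hM : Mx = Finset.univ.filter (fun i => ∀ j, x j ≤ x i))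
    (p : Fin N → ℝ) (hp0 : ∀ i, 0 ≤ p i) (hpsupp : ∀ i, i ∉ Kx → p i = 0)
    (hpsum : ∑ i ∈ Kx, p i = 1)
    (hFx : 0 < F x)
    (hjumps : ∀ i ∈ Kx, 1 / mu i ≤ x i) :
    ((∑ i, lam i * (F (Function.update x i (x i + 1 / mu i)) - F x)) +
        ∑ i ∈ Kx, p i * mu i * (F (Function.update x i (x i - 1 / mu i)) - F x)
      ≤ (∑ i ∈ Finset.univ \ Mx, lam i / mu i) - 1) ∧
    (∑ i ∈ Finset.univ \ Mx, lam i / mu i) - 1 < 0 := by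
  set S := Finset.univ.sup' hne x with hS
  obtain ⟨i0, -, hi0⟩ := Finset.exists_mem_eq_sup' hne x
  have hi0' : S = x i0 := hi0
  have hxS : ∀ j, x j ≤ S := fun j => Finset.le_sup' x (Finset.mem_univ j)
  have hi0M : i0 ∈ Mx := by
    rw [hM]
    simp only [Finset.mem_filter, Finset.mem_univ, true_and]
    intro j; rw [← hi0]; exact hxS j
  -- sum of update
  have hsum : ∀ (i : Fin N) (v : ℝ),
      ∑ j, Function.update x i v j = (∑ j, x j) + (v - x i) := by
    intro i v
    rw [Finset.sum_update_of_mem (Finset.mem_univ i)]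
    have h2 := Finset.sum_eq_sum_sdiff_singleton_add (Finset.mem_univ i) x
    linarith
  -- upward jump bounds
  have hsup_up : ∀ (i : Fin N) (c : ℝ), 0 ≤ c →
      S ≤ Finset.univ.sup' hne (Function.update x i (x i + c)) := by
    intro i c hc
    apply Finset.sup'_le
    intro j _
    rcases eq_or_ne j i with rfl | h
    · calc x j ≤ x j + c := by linarith
        _ = Function.update x j (x j + c) j := by simp
        _ ≤ _ := Finset.le_sup' _ (Finset.mem_univ j)
    · calc x j = Function.update x i (x i + c) j := by
            rw [Function.update_of_ne h]
        _ ≤ _ := Finset.le_sup' _ (Finset.mem_univ j)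
  have hFup : ∀ (i : Fin N) (c : ℝ), 0 ≤ c →
      F (Function.update x i (x i + c)) - F x ≤ c := by
    intro i c hc
    rw [hF, hF, hsum]
    have := hsup_up i c hc
    linarith
  have hFupM : ∀ (i : Fin N) (c : ℝ), 0 ≤ c → x i = S →
      F (Function.update x i (x i + c)) - F x ≤ 0 := by
    intro i c hc hxi
    rw [hF, hF, hsum]
    have h1 : x i + c ≤ Finset.univ.sup' hne (Function.update x i (x i + c)) := by
      calc x i + c = Function.update x i (x i + c) i := by simp
        _ ≤ _ := Finset.le_sup' _ (Finset.mem_univ i)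
    linarith
  -- second max existence for i ∈ Kx
  have h2max : ∀ i ∈ Kx, ∃ j, j ≠ i ∧ x j = S := by
    intro i hi
    rw [hK] at hi
    simp only [Finset.mem_filter, Finset.mem_univ, true_and] at hi
    by_cases hiM : ∀ j, x j ≤ x i
    · have hxi : x i = S := le_antisymm (hxS i) (by rw [hi0']; exact hiM i0)
      have hFx' : 0 < (∑ j, x j) - S := by rw [hF] at hFx; exact hFx
      have hrest : 0 < ∑ j ∈ Finset.univ.erase i, x j := by
        have h3 : ∑ j ∈ Finset.univ.erase i, x j = (∑ j, x j) - x i := by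
          rw [Finset.sum_erase_eq_sub (Finset.mem_univ i)]
        rw [h3, hxi]; linarith
      have : ∃ j ∈ Finset.univ.erase i, 0 < x j := by
        by_contra hcon
        push_neg at hcon
        have : ∑ j ∈ Finset.univ.erase i, x j ≤ 0 :=
          Finset.sum_nonpos fun j hj => hcon j hj
        linarith
      obtain ⟨j, hj, hjpos⟩ := this
      refine ⟨j, Finset.ne_of_mem_erase hj, le_antisymm (hxS j) ?_⟩
      rw [← hxi]; exact hi.2 j hjpos
    · push_neg at hiM
      obtain ⟨j, hj⟩ := hiM
      refine ⟨i0, ?_, hi0.symm⟩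
      intro h
      rw [h] at hi0'
      have := hxS j
      rw [hi0'] at this
      linarith
  -- downward jump exact value
  have hFdown : ∀ i ∈ Kx,
      F (Function.update x i (x i - 1 / mu i)) - F x = -(1 / mu i) := by
    intro i hi
    obtain ⟨j, hji, hjS⟩ := h2max i hi
    have hsupd : Finset.univ.sup' hne (Function.update x i (x i - 1 / mu i)) = S := by
      apply le_antisymm
      · apply Finset.sup'_le
        intro k _
        rcases eq_or_ne k i with rfl | h
        · simp only [Function.update_self]
          have := hxS k
          have := (hmu k).le
          have : 0 ≤ 1 / mu k := div_nonneg zero_le_one (hmu k).le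
          linarith [hxS k]
        · rw [Function.update_of_ne h]; exact hxS k
      · calc S = x j := hjS.symm
          _ = Function.update x i (x i - 1 / mu i) j := by
              rw [Function.update_of_ne hji]
          _ ≤ _ := Finset.le_sup' _ (Finset.mem_univ j)
    rw [hF, hF, hsum, hsupd]
    ring
  -- downward sum = -1
  have hB : ∑ i ∈ Kx, p i * mu i * (F (Function.update x i (x i - 1 / mu i)) - F x)
      = -1 := by
    have : ∀ i ∈ Kx, p i * mu i * (F (Function.update x i (x i - 1 / mu i)) - F x)
        = -(p i) := by
      intro i hi
      rw [hFdown i hi]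
      have : mu i ≠ 0 := (hmu i).ne'
      field_simp
    rw [Finset.sum_congr rfl this, Finset.sum_neg_distrib, hpsum]
  -- upward sum bound
  have hMsub : Mx ⊆ Finset.univ := Finset.subset_univ Mx
  have hsplit := Finset.sum_sdiff (f := fun i =>
    lam i * (F (Function.update x i (x i + 1 / mu i)) - F x)) hMsub
  have hA1 : ∑ i ∈ Mx, lam i * (F (Function.update x i (x i + 1 / mu i)) - F x) ≤ 0 := by
    apply Finset.sum_nonpos
    intro i hi
    rw [hM] at hi
    simp only [Finset.mem_filter, Finset.mem_univ, true_and] at hi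
    have hxi : x i = S := le_antisymm (hxS i) (by rw [hi0']; exact hi i0)
    have hc : (0:ℝ) ≤ 1 / mu i := div_nonneg zero_le_one (hmu i).le
    exact mul_nonpos_of_nonneg_of_nonpos (hlam i).le (hFupM i _ hc hxi)
  have hA2 : ∑ i ∈ Finset.univ \ Mx, lam i * (F (Function.update x i (x i + 1 / mu i)) - F x)
      ≤ ∑ i ∈ Finset.univ \ Mx, lam i / mu i := by
    apply Finset.sum_le_sum
    intro i _
    have hc : (0:ℝ) ≤ 1 / mu i := div_nonneg zero_le_one (hmu i).le
    calc lam i * (F (Function.update x i (x i + 1 / mu i)) - F x)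
        ≤ lam i * (1 / mu i) := by
          exact mul_le_mul_of_nonneg_left (hFup i _ hc) (hlam i).le
      _ = lam i / mu i := by ring
  constructor
  · calc (∑ i, lam i * (F (Function.update x i (x i + 1 / mu i)) - F x)) +
        ∑ i ∈ Kx, p i * mu i * (F (Function.update x i (x i - 1 / mu i)) - F x)
        = (∑ i ∈ Finset.univ \ Mx, lam i * (F (Function.update x i (x i + 1 / mu i)) - F x))
          + (∑ i ∈ Mx, lam i * (F (Function.update x i (x i + 1 / mu i)) - F x)) + (-1) := by
          rw [hB, hsplit]
      _ ≤ (∑ i ∈ Finset.univ \ Mx, lam i / mu i) - 1 := by linarith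
  · have hsplit2 := Finset.sum_sdiff (f := fun i => lam i / mu i) hMsub
    have hMpos : lam i0 / mu i0 ≤ ∑ i ∈ Mx, lam i / mu i := by
      apply Finset.single_le_sum (f := fun i => lam i / mu i) _ hi0M
      intro i _
      exact div_nonneg (hlam i).le (hmu i).le
    have h0 : 0 < lam i0 / mu i0 := div_pos (hlam i0) (hmu i0)
    rw [hcrit] at hsplit2
    linarith
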